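/- arXiv:1501.07904 — 2 statements merged into one kernel-verified Lean document; each statement's English description precedes it below -/
import Mathlib

section
/- There exist universal constants B > 0 and M > 0 such that the following holds. Let X be a δ-hyperbolic space with δ > 0, let p, q ∈ X, set D = d(p,q), fix a geodesic segment [p,q], and choose points p', q' on [p,q] with d(p,p') = d(p',q') = d(q',q) = D/3. Let R > 0 and let γ be a path from p to q in X whose image is disjoint from the closed R-neighborhood of the sub-segment of [p,q] between p' and q'. If R/δ ≥ M and D/δ ≥ M, then ℓ(γ) ≥ D · B · 2^{R/δ}. -/
/-- A geodesic segment between `a` and `b`: the image of an isometric embedding of the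
real interval `[0, dist a b]` sending the endpoints to `a` and `b`. -/
def IsGeodesicSegment {X : Type*} [MetricSpace X] (a b : X) (s : Set X) : Prop :=
  ∃ f : ℝ → X, f 0 = a ∧ f (dist a b) = b ∧
    (∀ u ∈ Set.Icc (0 : ℝ) (dist a b), ∀ v ∈ Set.Icc (0 : ℝ) (dist a b),
      dist (f u) (f v) = |u - v|) ∧
    s = f '' Set.Icc (0 : ℝ) (dist a b)

/-- A geodesic metric space: every pair of points is joined by a geodesic segment. -/
def GeodesicSpace (X : Type*) [MetricSpace X] : Prop :=
  ∀ a b : X, ∃ s : Set X, IsGeodesicSegment a b s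

/-- A geodesic triangle with sides `s₁, s₂, s₃` is `δ`-thin if each side is contained in
the closed `δ`-neighborhood of the union of the other two sides. -/
def ThinTriangle {X : Type*} [MetricSpace X] (δ : ℝ) (s₁ s₂ s₃ : Set X) : Prop :=
  (∀ p ∈ s₁, ∃ q ∈ s₂ ∪ s₃, dist p q ≤ δ) ∧
  (∀ p ∈ s₂, ∃ q ∈ s₁ ∪ s₃, dist p q ≤ δ) ∧
  (∀ p ∈ s₃, ∃ q ∈ s₁ ∪ s₂, dist p q ≤ δ)

/-- A `δ`-hyperbolic space: a geodesic metric space in which every geodesic triangle is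
`δ`-thin. -/
def IsHyperbolicSpace (X : Type*) [MetricSpace X] (δ : ℝ) : Prop :=
  GeodesicSpace X ∧
  ∀ (x y z : X) (sxy sxz syz : Set X),
    IsGeodesicSegment x y sxy → IsGeodesicSegment x z sxz → IsGeodesicSegment y z syz →
    ThinTriangle δ sxy sxz syz

/-!
A path of length `L` joining the endpoints of a geodesic passes within `(log₂ (L / δ) + 1) δ` of
every point of it: cut the path into two halves of equal length and use a thin triangle.

Call `d(p, x) - d(q, x)` the level of `x`. If `x` has the level of a point `v ∈ [p, q]`, the Gromov
products `(p | x)_v` and `(q | x)_v` coincide, so both are `≤ δ` by thinness of the triangle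
`p q x`. The level runs continuously from `-D` to `D` along `γ`, so `γ` splits into `⌊D / 24δ⌋`
consecutive arcs whose endpoints have the levels of points `8δ` apart in the middle third of
`[p, q]`. The geodesic chord of each arc then passes within `2δ` of the point of `[p, q]` halfway
between, which is farther than `R` from `γ`; hence each arc has length at least `δ 2^(R/δ - 4)`.
-/

open Set

section Variation

variable {α E : Type*} [LinearOrder α] [TopologicalSpace α] [OrderTopology α]
  [PseudoMetricSpace E]

theorem LocallyBoundedVariationOn.continuousOn_variationOnFromTo {f : α → E} {s : Set α}
    (hf : LocallyBoundedVariationOn f s) (hc : ContinuousOn f s) {a : α} (ha : a ∈ s) :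
    ContinuousOn (variationOnFromTo f s a) s := by
  intro x hx
  have hleft : ContinuousWithinAt (variationOnFromTo f s a) (s ∩ Iio x) x := by
    simpa [ContinuousWithinAt] using
      variationOnFromTo.tendsto_left ha hx hf ((hc x hx).mono inter_subset_left)
  have hright : ContinuousWithinAt (variationOnFromTo f s a) (s ∩ Ioi x) x := by
    simpa [ContinuousWithinAt] using
      variationOnFromTo.tendsto_right ha hx hf ((hc x hx).mono inter_subset_left)
  refine ((hleft.union hright).union continuousWithinAt_singleton).mono fun y hy => ?_
  rcases lt_trichotomy y x with h | rfl | h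
  · exact Or.inl (Or.inl ⟨hy, h⟩)
  · exact Or.inr rfl
  · exact Or.inl (Or.inr ⟨hy, h⟩)

theorem ContinuousOn.exists_eVariationOn_Icc_eq {γ : ℝ → E} {a b : ℝ}
    (hγ : ContinuousOn γ (Icc a b)) (hab : a ≤ b) (hfin : eVariationOn γ (Icc a b) ≠ ⊤) :
    ∃ m ∈ Icc a b, eVariationOn γ (Icc a m) = eVariationOn γ (Icc m b) := by
  have hbv : LocallyBoundedVariationOn γ (Icc a b) :=
    BoundedVariationOn.locallyBoundedVariationOn hfin
  have ha : a ∈ Icc a b := left_mem_Icc.2 hab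
  have hb : b ∈ Icc a b := right_mem_Icc.2 hab
  set V := variationOnFromTo γ (Icc a b)
  have hVa : V a a = 0 := variationOnFromTo.self _ _ a
  have hVb : 0 ≤ V a b := variationOnFromTo.nonneg_of_le _ _ hab
  obtain ⟨m, hm, hVm⟩ : V a b / 2 ∈ V a '' Icc a b :=
    intermediate_value_Icc hab (hbv.continuousOn_variationOnFromTo hγ ha)
      ⟨by linarith, by linarith⟩
  have hadd : V a m + V m b = V a b := variationOnFromTo.add hbv ha hm hb
  have hsub {c d : ℝ} (hc : a ≤ c) (hd : d ≤ b) : Icc a b ∩ Icc c d = Icc c d :=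
    inter_eq_right.2 (Icc_subset_Icc hc hd)
  have hfin' {c d : ℝ} (hc : a ≤ c) (hd : d ≤ b) : eVariationOn γ (Icc c d) ≠ ⊤ :=
    ne_top_of_le_ne_top hfin (eVariationOn.mono γ (Icc_subset_Icc hc hd))
  refine ⟨m, hm, (ENNReal.toReal_eq_toReal_iff' (hfin' le_rfl hm.2) (hfin' hm.1 le_rfl)).1 ?_⟩
  have h1 : V a m = (eVariationOn γ (Icc a m)).toReal := by
    simp only [V, variationOnFromTo, if_pos hm.1, hsub le_rfl hm.2]
  have h2 : V m b = (eVariationOn γ (Icc m b)).toReal := by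
    simp only [V, variationOnFromTo, if_pos hm.2, hsub hm.1 le_rfl]
  linarith

end Variation

variable {X : Type*} [MetricSpace X]

/-- The Gromov product `(x | y)_w`. -/
noncomputable def gromovProduct (w x y : X) : ℝ := (dist w x + dist w y - dist x y) / 2

theorem sub_le_two_mul_gromovProduct_add (p q x u u' : X) :
    dist u q + dist u' p - dist u' q - dist u p ≤
      2 * (gromovProduct u q x + gromovProduct u' p x) := by
  unfold gromovProduct
  linarith [dist_triangle q u' x, dist_triangle p u x, dist_comm u' q, dist_comm u p]

namespace IsGeodesicSegment

variable {a b v : X} {s : Set X}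

theorem symm (h : IsGeodesicSegment a b s) : IsGeodesicSegment b a s := by
  obtain ⟨f, hf0, hfd, hiso, rfl⟩ := h
  rw [IsGeodesicSegment, dist_comm b a]
  set d := dist a b
  have hreflect : (fun t => d - t) '' Icc 0 d = Icc 0 d := by simp
  refine ⟨fun t => f (d - t), by simpa using hfd, by simpa using hf0, fun u hu v hv => ?_, ?_⟩
  · rw [hiso _ ⟨by linarith [hu.2], by linarith [hu.1]⟩ _ ⟨by linarith [hv.2], by linarith [hv.1]⟩,
      abs_sub_comm]
    ring_nf
  · nth_rw 1 [← hreflect]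
    rw [image_image]

theorem dist_add_dist_eq (h : IsGeodesicSegment a b s) (hv : v ∈ s) :
    dist a v + dist v b = dist a b := by
  obtain ⟨f, hf0, hfd, hiso, rfl⟩ := h
  obtain ⟨t, ht, rfl⟩ := hv
  have h0 : (0 : ℝ) ∈ Icc 0 (dist a b) := left_mem_Icc.2 dist_nonneg
  have hd : dist a b ∈ Icc 0 (dist a b) := right_mem_Icc.2 dist_nonneg
  have h1 := hiso 0 h0 t ht
  have h2 := hiso t ht _ hd
  rw [hf0] at h1
  rw [hfd] at h2
  rw [h1, h2, abs_of_nonpos (by linarith [ht.1]), abs_of_nonpos (by linarith [ht.2])]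
  ring

theorem gromovProduct_le_dist (h : IsGeodesicSegment a b s) (hv : v ∈ s) (w : X) :
    gromovProduct w a b ≤ dist v w := by
  unfold gromovProduct
  linarith [h.dist_add_dist_eq hv, dist_triangle w v a, dist_triangle w v b, dist_comm v a,
    dist_comm w v]

end IsGeodesicSegment

namespace IsHyperbolicSpace

variable {δ : ℝ} {p q : X} {s : Set X}

theorem gromovProduct_le_or_le (hX : IsHyperbolicSpace X δ) (hs : IsGeodesicSegment p q s)
    {v : X} (hv : v ∈ s) (x : X) : gromovProduct v p x ≤ δ ∨ gromovProduct v q x ≤ δ := by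
  obtain ⟨spx, hpx⟩ := hX.1 p x
  obtain ⟨sqx, hqx⟩ := hX.1 q x
  obtain ⟨z, hz | hz, hvz⟩ := (hX.2 p q x s spx sqx hs hpx hqx).1 v hv
  · exact Or.inl ((hpx.gromovProduct_le_dist hz v).trans (dist_comm z v ▸ hvz))
  · exact Or.inr ((hqx.gromovProduct_le_dist hz v).trans (dist_comm z v ▸ hvz))

theorem gromovProduct_le_of_dist_sub_dist_eq (hX : IsHyperbolicSpace X δ)
    (hs : IsGeodesicSegment p q s) {v x : X} (hv : v ∈ s)
    (hx : dist p x - dist q x = dist p v - dist q v) :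
    gromovProduct v p x ≤ δ ∧ gromovProduct v q x ≤ δ := by
  have heq : gromovProduct v p x = gromovProduct v q x := by
    unfold gromovProduct
    linarith [dist_comm v p, dist_comm v q]
  rcases hX.gromovProduct_le_or_le hs hv x with h | h
  · exact ⟨h, heq ▸ h⟩
  · exact ⟨heq ▸ h, h⟩

theorem exists_mem_dist_le_of_lt_gromovProduct (hX : IsHyperbolicSpace X δ)
    (hs : IsGeodesicSegment p q s) {m x y : X} (hm : m ∈ s) (hx : δ < gromovProduct m p x)
    (hy : 2 * δ < gromovProduct m q y) {sxy : Set X} (hxy : IsGeodesicSegment x y sxy) :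
    ∃ w ∈ sxy, dist m w ≤ 2 * δ := by
  obtain ⟨spx, hpx⟩ := hX.1 p x
  obtain ⟨sqx, hqx⟩ := hX.1 q x
  obtain ⟨sqy, hqy⟩ := hX.1 q y
  obtain ⟨z, hz, hmz⟩ := (hX.2 p q x s spx sqx hs hpx hqx).1 m hm
  replace hz : z ∈ sqx := hz.resolve_left fun hz => by
    linarith [hpx.gromovProduct_le_dist hz m, dist_comm z m]
  obtain ⟨w, hw, hzw⟩ := (hX.2 q x y sqx sqy sxy hqx hqy hxy).1 z hz
  replace hw : w ∈ sxy := hw.resolve_left fun hw => by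
    linarith [hqy.gromovProduct_le_dist hw m, dist_triangle w z m, dist_comm w z, dist_comm z m]
  exact ⟨w, hw, by linarith [dist_triangle m z w]⟩

theorem exists_mem_dist_le_of_dist_sub_dist_eq (hX : IsHyperbolicSpace X δ) (hδ : 0 < δ)
    (hs : IsGeodesicSegment p q s) {v m v' x y : X} (hv : v ∈ s) (hm : m ∈ s) (hv' : v' ∈ s)
    (hvm : dist p v + 4 * δ ≤ dist p m) (hmv' : dist p m + 4 * δ ≤ dist p v')
    (hx : dist p x - dist q x = dist p v - dist q v)
    (hy : dist p y - dist q y = dist p v' - dist q v') {sxy : Set X}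
    (hxy : IsGeodesicSegment x y sxy) : ∃ w ∈ sxy, dist m w ≤ 2 * δ := by
  have hqx := (hX.gromovProduct_le_of_dist_sub_dist_eq hs hv hx).2
  have hpy := (hX.gromovProduct_le_of_dist_sub_dist_eq hs hv' hy).1
  have hx' := sub_le_two_mul_gromovProduct_add p q x v m
  have hy' := sub_le_two_mul_gromovProduct_add q p y v' m
  have hv_pos := hs.dist_add_dist_eq hv
  have hm_pos := hs.dist_add_dist_eq hm
  have hv'_pos := hs.dist_add_dist_eq hv'
  -- `(p | x)_m ≥ 3δ` and `(q | y)_m ≥ 3δ`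
  refine hX.exists_mem_dist_le_of_lt_gromovProduct hs hm ?_ ?_ hxy <;>
    linarith [dist_comm m p, dist_comm v p, dist_comm v' p]

theorem exists_dist_le_of_eVariationOn_le (hX : IsHyperbolicSpace X δ) (hδ : 0 ≤ δ)
    {γ : ℝ → X} (N : ℕ) :
    ∀ {a b : ℝ} {s : Set X} {w : X}, a ≤ b → ContinuousOn γ (Icc a b) →
      eVariationOn γ (Icc a b) ≤ ENNReal.ofReal (2 ^ N * δ) →
      IsGeodesicSegment (γ a) (γ b) s → w ∈ s → ∃ r ∈ Icc a b, dist w (γ r) ≤ (N + 1) * δ := by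
  induction N with
  | zero =>
    intro a b s w hab _ hL hs hw
    have hend : edist (γ a) (γ b) ≤ ENNReal.ofReal δ := by
      simpa using (eVariationOn.edist_le γ (left_mem_Icc.2 hab) (right_mem_Icc.2 hab)).trans hL
    rw [edist_le_ofReal hδ] at hend
    refine ⟨a, left_mem_Icc.2 hab, ?_⟩
    rw [Nat.cast_zero, zero_add, one_mul]
    linarith [hs.dist_add_dist_eq hw, dist_comm w (γ a), dist_nonneg (x := w) (y := γ b)]
  | succ N ih =>
    intro a b s w hab hγ hL hs hw
    obtain ⟨m, hm, hhalf⟩ := hγ.exists_eVariationOn_Icc_eq hab (ne_top_of_le_ne_top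
      ENNReal.ofReal_ne_top hL)
    have hsum := eVariationOn.Icc_add_Icc γ (s := univ) hm.1 hm.2 (mem_univ m)
    simp only [univ_inter] at hsum
    have hL' : eVariationOn γ (Icc a m) ≤ ENNReal.ofReal (2 ^ N * δ) := by
      rw [← ENNReal.mul_le_mul_iff_right two_ne_zero ENNReal.ofNat_ne_top]
      calc 2 * eVariationOn γ (Icc a m) = eVariationOn γ (Icc a b) := by
            rw [two_mul, ← hsum, hhalf]
        _ ≤ ENNReal.ofReal (2 * (2 ^ N * δ)) := by rwa [← mul_assoc, ← pow_succ']
        _ = 2 * ENNReal.ofReal (2 ^ N * δ) := by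
            rw [ENNReal.ofReal_mul zero_le_two, ENNReal.ofReal_ofNat]
    obtain ⟨s₁, h₁⟩ := hX.1 (γ a) (γ m)
    obtain ⟨s₂, h₂⟩ := hX.1 (γ m) (γ b)
    obtain ⟨z, hz | hz, hwz⟩ := (hX.2 (γ a) (γ b) (γ m) s s₁ s₂ hs h₁ h₂.symm).1 w hw
    · obtain ⟨r, hr, hzr⟩ := ih hm.1 (hγ.mono (Icc_subset_Icc le_rfl hm.2)) hL' h₁ hz
      refine ⟨r, Icc_subset_Icc le_rfl hm.2 hr, ?_⟩
      push_cast
      linarith [dist_triangle w z (γ r)]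
    · obtain ⟨r, hr, hzr⟩ := ih hm.2 (hγ.mono (Icc_subset_Icc hm.1 le_rfl)) (hhalf ▸ hL') h₂ hz
      refine ⟨r, Icc_subset_Icc hm.1 le_rfl hr, ?_⟩
      push_cast
      linarith [dist_triangle w z (γ r)]

theorem ofReal_le_eVariationOn_of_lt_dist (hX : IsHyperbolicSpace X δ) (hδ : 0 < δ) {R : ℝ}
    (hR : 3 * δ ≤ R) {γ : ℝ → X} {a b : ℝ} (hab : a ≤ b) (hγ : ContinuousOn γ (Icc a b))
    (hs : IsGeodesicSegment (γ a) (γ b) s) {w m : X} (hw : w ∈ s) (hmw : dist m w ≤ 2 * δ)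
    (hfar : ∀ r ∈ Icc a b, R < dist (γ r) m) :
    ENNReal.ofReal (δ * 2 ^ (R / δ - 4)) ≤ eVariationOn γ (Icc a b) := by
  -- a path of length `≤ 2^N δ` would come within `(N + 3) δ ≤ R` of `m`
  set N := ⌊R / δ⌋₊ - 3
  have hN : (N : ℝ) + 3 = ⌊R / δ⌋₊ := by
    have : 3 ≤ ⌊R / δ⌋₊ := Nat.le_floor (by rw [le_div_iff₀ hδ]; push_cast; linarith)
    norm_cast
    omega
  have hNR : ((N : ℝ) + 3) * δ ≤ R := by
    rw [hN, ← le_div_iff₀ hδ]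
    exact Nat.floor_le (div_nonneg (by linarith) hδ.le)
  by_contra! hlt
  have hL : eVariationOn γ (Icc a b) ≤ ENNReal.ofReal (2 ^ N * δ) := by
    refine hlt.le.trans (ENNReal.ofReal_le_ofReal ?_)
    rw [mul_comm, ← Real.rpow_natCast]
    gcongr
    · norm_num
    · linarith [Nat.lt_floor_add_one (R / δ)]
  obtain ⟨r, hr, hwr⟩ := hX.exists_dist_le_of_eVariationOn_le hδ.le N hab hγ hL hs hw
  linarith [hfar r hr, dist_triangle (γ r) w m, dist_comm w (γ r), dist_comm m w]

theorem ofReal_le_eVariationOn_of_dist_sub_dist_eq (hX : IsHyperbolicSpace X δ) (hδ : 0 < δ)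
    {R : ℝ} (hR : 3 * δ ≤ R) {f : ℝ → X} (hs : IsGeodesicSegment p q (f '' Icc 0 (dist p q)))
    (hf : ∀ t ∈ Icc 0 (dist p q), dist p (f t) = t) {γ : ℝ → X} {a c t : ℝ} (hac : a ≤ c)
    (hγ : ContinuousOn γ (Icc a c)) (ht : 0 ≤ t) (htD : t + 8 * δ ≤ dist p q)
    (ha : dist p (γ a) - dist q (γ a) = 2 * t - dist p q)
    (hc : dist p (γ c) - dist q (γ c) = 2 * (t + 8 * δ) - dist p q)
    (hfar : ∀ r ∈ Icc a c, R < dist (γ r) (f (t + 4 * δ))) :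
    ENNReal.ofReal (δ * 2 ^ (R / δ - 4)) ≤ eVariationOn γ (Icc a c) := by
  have hmem {t' : ℝ} (ht' : t' ∈ Icc 0 (dist p q)) : f t' ∈ f '' Icc 0 (dist p q) :=
    mem_image_of_mem f ht'
  have hlevel {t' : ℝ} (ht' : t' ∈ Icc 0 (dist p q)) :
      dist p (f t') - dist q (f t') = 2 * t' - dist p q := by
    linarith [hs.dist_add_dist_eq (hmem ht'), hf t' ht', dist_comm q (f t')]
  have h0 : t ∈ Icc 0 (dist p q) := ⟨ht, by linarith⟩
  have h4 : t + 4 * δ ∈ Icc 0 (dist p q) := ⟨by linarith, by linarith⟩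
  have h8 : t + 8 * δ ∈ Icc 0 (dist p q) := ⟨by linarith, htD⟩
  obtain ⟨sac, hsac⟩ := hX.1 (γ a) (γ c)
  obtain ⟨w, hw, hmw⟩ := hX.exists_mem_dist_le_of_dist_sub_dist_eq hδ hs (hmem h0) (hmem h4)
    (hmem h8) (by linarith [hf _ h0, hf _ h4])
    (by linarith [hf _ h4, hf _ h8])
    (by rw [ha, hlevel h0]) (by rw [hc, hlevel h8]) hsac
  exact hX.ofReal_le_eVariationOn_of_lt_dist hδ hR hac hγ hsac hw hmw hfar

theorem natCast_mul_le_eVariationOn (hX : IsHyperbolicSpace X δ) (hδ : 0 < δ) {R : ℝ}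
    (hR : 3 * δ ≤ R) {f : ℝ → X} (hs : IsGeodesicSegment p q (f '' Icc 0 (dist p q)))
    (hf : ∀ t ∈ Icc 0 (dist p q), dist p (f t) = t) {γ : ℝ → X} {b : ℝ} (hγb : γ b = q)
    (n : ℕ) :
    ∀ {a t : ℝ}, a ≤ b → ContinuousOn γ (Icc a b) → 0 ≤ t → t + 8 * δ * n ≤ dist p q →
      dist p (γ a) - dist q (γ a) = 2 * t - dist p q →
      (∀ r ∈ Icc a b, ∀ t' ∈ Icc t (t + 8 * δ * n), R < dist (γ r) (f t')) →
      n * ENNReal.ofReal (δ * 2 ^ (R / δ - 4)) ≤ eVariationOn γ (Icc a b) := by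
  induction n with
  | zero => intros; simp
  | succ n ih =>
    intro a t hab hγ ht htD ha hfar
    push_cast at htD hfar
    have hn : 0 ≤ δ * n := mul_nonneg hδ.le n.cast_nonneg
    obtain ⟨c, hc, hlevel⟩ : 2 * (t + 8 * δ) - dist p q ∈
        (fun r => dist p (γ r) - dist q (γ r)) '' Icc a b :=
      intermediate_value_Icc hab (by fun_prop)
        ⟨by rw [ha]; linarith, by simp only [hγb, dist_self]; linarith⟩
    have hpiece := hX.ofReal_le_eVariationOn_of_dist_sub_dist_eq hδ hR hs hf hc.1
      (hγ.mono (Icc_subset_Icc le_rfl hc.2)) ht (by linarith) ha hlevel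
      (fun r hr => hfar r ⟨hr.1, hr.2.trans hc.2⟩ _ ⟨by linarith, by linarith⟩)
    have hrest := ih hc.2 (hγ.mono (Icc_subset_Icc hc.1 le_rfl)) (by linarith) (by linarith)
      hlevel fun r hr t' ht' =>
        hfar r ⟨hc.1.trans hr.1, hr.2⟩ t' ⟨by linarith [ht'.1], by linarith [ht'.2]⟩
    have hsum := eVariationOn.Icc_add_Icc γ (s := univ) hc.1 hc.2 (mem_univ c)
    simp only [univ_inter] at hsum
    rw [← hsum, Nat.cast_succ, add_one_mul, add_comm]
    exact add_le_add hpiece hrest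

end IsHyperbolicSpace

/-- **Lemma (long detours around a cylinder).**
There are universal constants `B, M > 0` such that: in a `δ`-hyperbolic space, if
`D = d(p,q)`, `[p,q]` is a geodesic segment parametrized by `f`, `p' = f(D/3)` and
`q' = f(2D/3)` are the points trisecting it, and `γ` is a path from `p` to `q` whose image
avoids the closed `R`-neighborhood of the sub-segment between `p'` and `q'`, then whenever
`R/δ ≥ M` and `D/δ ≥ M` we have `ℓ(γ) ≥ D · B · 2^(R/δ)`. -/
theorem long_path_lemma :
    ∃ B M : ℝ, 0 < B ∧ 0 < M ∧
      ∀ (X : Type) [MetricSpace X] (δ : ℝ), 0 < δ → IsHyperbolicSpace X δ →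
        ∀ (p q : X) (f : ℝ → X),
          f 0 = p → f (dist p q) = q →
          (∀ u ∈ Set.Icc (0 : ℝ) (dist p q), ∀ v ∈ Set.Icc (0 : ℝ) (dist p q),
            dist (f u) (f v) = |u - v|) →
          ∀ R : ℝ, 0 < R →
          ∀ (γ : ℝ → X) (a b : ℝ), a ≤ b →
            ContinuousOn γ (Set.Icc a b) → γ a = p → γ b = q →
            -- the image of `γ` is disjoint from the closed `R`-neighborhood of the
            -- sub-segment of `[p,q]` between `p' = f(D/3)` and `q' = f(2D/3)`
            (∀ x ∈ γ '' Set.Icc a b,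
              ∀ y ∈ f '' Set.Icc (dist p q / 3) (2 * dist p q / 3), R < dist x y) →
            M ≤ R / δ → M ≤ dist p q / δ →
            ENNReal.ofReal (dist p q * B * 2 ^ (R / δ)) ≤ eVariationOn γ (Set.Icc a b) := by
  refine ⟨1 / 768, 48, by norm_num, by norm_num, ?_⟩
  intro X _ δ hδ hX p q f hf0 hfD hiso R _ γ a b hab hγ hγa hγb hfar hMR hMD
  set D := dist p q
  have hR : 48 * δ ≤ R := (le_div_iff₀ hδ).1 hMR
  have hD : 48 * δ ≤ D := (le_div_iff₀ hδ).1 hMD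
  have hf (t : ℝ) (ht : t ∈ Icc 0 D) : dist p (f t) = t := by
    rw [← hf0, hiso 0 (left_mem_Icc.2 dist_nonneg) t ht, zero_sub, abs_neg, abs_of_nonneg ht.1]
  obtain ⟨a₀, ha₀, hlevel⟩ :
      2 * (D / 3) - D ∈ (fun r => dist p (γ r) - dist q (γ r)) '' Icc a b :=
    intermediate_value_Icc hab (by fun_prop)
      ⟨by simp only [hγa, dist_self, dist_comm q p]; linarith,
        by simp only [hγb, dist_self]; linarith⟩
  set n := ⌊D / (24 * δ)⌋₊
  have hn_le : n * (24 * δ) ≤ D := (le_div_iff₀ (by positivity)).1 (Nat.floor_le (by positivity))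
  have hn_gt : D < (n + 1) * (24 * δ) := (div_lt_iff₀ (by positivity)).1 (Nat.lt_floor_add_one _)
  have hcount := hX.natCast_mul_le_eVariationOn hδ (by linarith) ⟨f, hf0, hfD, hiso, rfl⟩ hf hγb
    n ha₀.2 (hγ.mono (Icc_subset_Icc ha₀.1 le_rfl)) (by positivity) (by linarith) hlevel
    fun r hr t' ht' => hfar _ ⟨r, ⟨ha₀.1.trans hr.1, hr.2⟩, rfl⟩ _
      ⟨t', ⟨ht'.1, by linarith [ht'.2]⟩, rfl⟩
  have hexp : (2 : ℝ) ^ (R / δ - 4) = 2 ^ (R / δ) / 16 := by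
    rw [Real.rpow_sub two_pos]
    norm_num
  calc ENNReal.ofReal (D * (1 / 768) * 2 ^ (R / δ))
      ≤ ENNReal.ofReal (n * (δ * 2 ^ (R / δ - 4))) := by
        refine ENNReal.ofReal_le_ofReal ?_
        rw [hexp]
        nlinarith [Real.rpow_pos_of_pos two_pos (R / δ)]
    _ = n * ENNReal.ofReal (δ * 2 ^ (R / δ - 4)) := by
        rw [ENNReal.ofReal_mul n.cast_nonneg, ENNReal.ofReal_natCast]
    _ ≤ eVariationOn γ (Icc a₀ b) := hcount
    _ ≤ eVariationOn γ (Icc a b) := eVariationOn.mono γ (Icc_subset_Icc ha₀.1 le_rfl)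
end

section
/- There is a universal constant C > 0 (for instance C = 8 works) such that the following holds. Let X be a δ-hyperbolic space with δ > 0, let p, q ∈ X, fix a geodesic segment σ between p and q, and let β be a path in X from p to q. Then for every closed subinterval I of σ of length C·δ, there exist a point x on the image of β and a point r ∈ I with d(x,r) = min_{s ∈ σ} d(x,s), i.e., r is a nearest point of σ to x and r lies in I. -/
open Set Metric

section Geodesic

variable {X : Type*} [MetricSpace X]

lemma continuousOn_of_dist_eq_abs_sub {f : ℝ → X} {S : Set ℝ}
    (hf : ∀ u ∈ S, ∀ v ∈ S, dist (f u) (f v) = |u - v|) : ContinuousOn f S :=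
  (LipschitzOnWith.of_dist_le' (K := 1) fun u hu v hv => by
    rw [hf u hu v hv, one_mul, Real.dist_eq]).continuousOn

lemma isGeodesicSegment_image_Icc {f : ℝ → X} {s₁ s₂ : ℝ}
    (hf : ∀ u ∈ Icc s₁ s₂, ∀ v ∈ Icc s₁ s₂, dist (f u) (f v) = |u - v|) (hle : s₁ ≤ s₂) :
    IsGeodesicSegment (f s₁) (f s₂) (f '' Icc s₁ s₂) := by
  have hd : dist (f s₁) (f s₂) = s₂ - s₁ := by
    rw [hf s₁ ⟨le_rfl, hle⟩ s₂ ⟨hle, le_rfl⟩, abs_sub_comm, abs_of_nonneg (sub_nonneg.2 hle)]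
  have shift : ∀ w ∈ Icc 0 (s₂ - s₁), s₁ + w ∈ Icc s₁ s₂ := fun w hw =>
    ⟨by linarith [hw.1], by linarith [hw.2]⟩
  refine ⟨fun w => f (s₁ + w), by simp, by simp only [hd, add_sub_cancel], ?_, ?_⟩
  · intro w hw w' hw'
    rw [hd] at hw hw'
    rw [hf _ (shift w hw) _ (shift w' hw'), add_sub_add_left_eq_sub]
  · rw [hd, ← image_image f (s₁ + ·), image_const_add_Icc, add_zero, add_sub_cancel]

lemma IsGeodesicSegment.dist_add_dist_eq_s3 {x y w : X} {σ : Set X}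
    (hσ : IsGeodesicSegment x y σ) (hw : w ∈ σ) : dist x w + dist w y = dist x y := by
  obtain ⟨g, hg0, hgd, hg, rfl⟩ := hσ
  obtain ⟨c, hc, rfl⟩ := hw
  have h0 : (0 : ℝ) ∈ Icc 0 (dist x y) := ⟨le_rfl, dist_nonneg⟩
  have hd : dist x y ∈ Icc 0 (dist x y) := ⟨dist_nonneg, le_rfl⟩
  conv_lhs => rw [← hg0, ← hgd, hg 0 h0 c hc, hg c hc _ hd]
  rw [abs_of_nonpos (by linarith [hc.1]), abs_of_nonpos (by linarith [hc.2])]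
  ring

lemma IsGeodesicSegment.dist_le_two_mul {x y z w : X} {σ : Set X} {δ : ℝ}
    (hσ : IsGeodesicSegment x y σ) (hw : w ∈ σ) (hzw : dist z w ≤ δ)
    (hxy : dist x y ≤ dist x z) : dist z y ≤ 2 * δ := by
  -- `w` splits `dist x y` exactly, and `dist x y ≤ dist x z ≤ dist x w + δ`, so `dist w y ≤ δ`.
  have hsplit := hσ.dist_add_dist_eq_s3 hw
  have hxz := dist_triangle x w z
  have hzy := dist_triangle z w y
  rw [dist_comm w z] at hxz
  linarith

end Geodesic

lemma sub_le_four_mul_of_isMinOn {X : Type*} [MetricSpace X] {δ : ℝ}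
    (hyp : IsHyperbolicSpace X δ) {f : ℝ → X} {s₁ s₂ : ℝ} (hle : s₁ ≤ s₂)
    (hf : ∀ u ∈ Icc s₁ s₂, ∀ v ∈ Icc s₁ s₂, dist (f u) (f v) = |u - v|) (x : X)
    (h₁ : IsMinOn (fun s => dist x (f s)) (Icc s₁ s₂) s₁)
    (h₂ : IsMinOn (fun s => dist x (f s)) (Icc s₁ s₂) s₂) : s₂ - s₁ ≤ 4 * δ := by
  obtain ⟨σ₁, hσ₁⟩ := hyp.1 x (f s₁)
  obtain ⟨σ₂, hσ₂⟩ := hyp.1 x (f s₂)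
  have thin := hyp.2 x (f s₁) (f s₂) σ₁ σ₂ _ hσ₁ hσ₂ (isGeodesicSegment_image_Icc hf hle)
  set m := (s₁ + s₂) / 2 with hm_def
  have hm : m ∈ Icc s₁ s₂ := ⟨by linarith, by linarith⟩
  have hs₁ : s₁ ∈ Icc s₁ s₂ := ⟨le_rfl, hle⟩
  have hs₂ : s₂ ∈ Icc s₁ s₂ := ⟨hle, le_rfl⟩
  obtain ⟨w, hw | hw, hmw⟩ := thin.2.2 (f m) ⟨m, hm, rfl⟩
  · have := hσ₁.dist_le_two_mul hw hmw (h₁ hm)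
    rw [hf m hm s₁ hs₁, abs_of_nonneg (by linarith)] at this
    linarith
  · have := hσ₂.dist_le_two_mul hw hmw (h₂ hm)
    rw [hf m hm s₂ hs₂, abs_of_nonpos (by linarith)] at this
    linarith

lemma exists_infDist_eq_infDist {X : Type*} [PseudoMetricSpace X] (A B : Set X)
    {β : ℝ → X} {a b : ℝ} (hab : a ≤ b) (hβ : ContinuousOn β (Icc a b))
    (ha : β a ∈ A) (hb : β b ∈ B) :
    ∃ t ∈ Icc a b, infDist (β t) A = infDist (β t) B := by
  let F : ℝ → ℝ := fun t => infDist (β t) A - infDist (β t) B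
  have hF : ContinuousOn F (Icc a b) :=
    ((continuous_infDist_pt A).comp_continuousOn hβ).sub
      ((continuous_infDist_pt B).comp_continuousOn hβ)
  have hFa : F a ≤ 0 := by
    simp only [F, infDist_zero_of_mem ha, zero_sub, neg_nonpos, infDist_nonneg]
  have hFb : 0 ≤ F b := by
    simp only [F, infDist_zero_of_mem hb, sub_zero, infDist_nonneg]
  obtain ⟨t, ht, hFt⟩ := intermediate_value_Icc hab hF ⟨hFa, hFb⟩
  exact ⟨t, ht, sub_eq_zero.1 hFt⟩

lemma exists_isMinOn_straddling {X : Type*} [MetricSpace X] {f : ℝ → X} {D m : ℝ}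
    (hf : ContinuousOn f (Icc 0 D)) (hm : m ∈ Icc 0 D) {β : ℝ → X} {a b : ℝ} (hab : a ≤ b)
    (hβ : ContinuousOn β (Icc a b)) (hβa : β a = f 0) (hβb : β b = f D) :
    ∃ t ∈ Icc a b, ∃ s₁ ∈ Icc 0 m, ∃ s₂ ∈ Icc m D,
      IsMinOn (fun s => dist (β t) (f s)) (Icc 0 D) s₁ ∧
      IsMinOn (fun s => dist (β t) (f s)) (Icc 0 D) s₂ := by
  have hsubA : Icc 0 m ⊆ Icc 0 D := Icc_subset_Icc le_rfl hm.2
  have hsubB : Icc m D ⊆ Icc 0 D := Icc_subset_Icc hm.1 le_rfl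
  set A := f '' Icc 0 m
  set B := f '' Icc m D
  have hA : IsCompact A := isCompact_Icc.image_of_continuousOn (hf.mono hsubA)
  have hB : IsCompact B := isCompact_Icc.image_of_continuousOn (hf.mono hsubB)
  obtain ⟨t, ht, heq⟩ := exists_infDist_eq_infDist A B hab hβ
    (hβa ▸ mem_image_of_mem f ⟨le_rfl, hm.1⟩) (hβb ▸ mem_image_of_mem f ⟨hm.2, le_rfl⟩)
  obtain ⟨_, ⟨s₁, hs₁, rfl⟩, hd₁⟩ :=
    hA.exists_infDist_eq_dist ⟨f 0, mem_image_of_mem f ⟨le_rfl, hm.1⟩⟩ (β t)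
  obtain ⟨_, ⟨s₂, hs₂, rfl⟩, hd₂⟩ :=
    hB.exists_infDist_eq_dist ⟨f D, mem_image_of_mem f ⟨hm.2, le_rfl⟩⟩ (β t)
  have hmin : ∀ s ∈ Icc 0 D, infDist (β t) A ≤ dist (β t) (f s) := by
    intro s hs
    rcases le_total s m with h | h
    · exact infDist_le_dist_of_mem (mem_image_of_mem f ⟨hs.1, h⟩)
    · exact heq ▸ infDist_le_dist_of_mem (mem_image_of_mem f ⟨h, hs.2⟩)
  refine ⟨t, ht, s₁, hs₁, s₂, hs₂, fun s hs => ?_, fun s hs => ?_⟩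
  · exact hd₁.symm.trans_le (hmin s hs)
  · exact (hd₂.symm.trans heq.symm).trans_le (hmin s hs)

/-- **Lemma (skeleton).** There is a universal constant `C > 0` such that: in a
`δ`-hyperbolic space, if `σ` is a geodesic segment from `p` to `q` parametrized by `f`,
and `β` is a path from `p` to `q`, then every closed subinterval of `σ` of length `C·δ`
contains a point `r` which is a nearest point of `σ` to some point `x` on `β`. -/
theorem skeleton_lemma :
    ∃ C : ℝ, 0 < C ∧
      ∀ (X : Type) [MetricSpace X] (δ : ℝ), 0 < δ → IsHyperbolicSpace X δ →
        ∀ (p q : X) (f : ℝ → X),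
          f 0 = p → f (dist p q) = q →
          (∀ u ∈ Set.Icc (0 : ℝ) (dist p q), ∀ v ∈ Set.Icc (0 : ℝ) (dist p q),
            dist (f u) (f v) = |u - v|) →
          ∀ (β : ℝ → X) (a b : ℝ), a ≤ b →
            ContinuousOn β (Set.Icc a b) → β a = p → β b = q →
            -- `f '' [u,v]` is a closed subinterval of `σ` of length `C·δ`
            ∀ u v : ℝ, 0 ≤ u → v ≤ dist p q → v - u = C * δ →
              ∃ t ∈ Set.Icc a b, ∃ r ∈ f '' Set.Icc u v,
                ∀ s ∈ f '' Set.Icc (0 : ℝ) (dist p q), dist (β t) r ≤ dist (β t) s := by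
  refine ⟨8, by norm_num, ?_⟩
  intro X _ δ hδ hyp p q f hf0 hfD hf β a b hab hβ hβa hβb u v hu hv huv
  obtain ⟨t, ht, s₁, hs₁, s₂, hs₂, hmin₁, hmin₂⟩ :=
    exists_isMinOn_straddling (m := u + 4 * δ) (continuousOn_of_dist_eq_abs_sub hf)
      ⟨by linarith, by linarith⟩ hab hβ (hβa.trans hf0.symm) (hβb.trans hfD.symm)
  have hsub : Icc s₁ s₂ ⊆ Icc 0 (dist p q) := Icc_subset_Icc hs₁.1 hs₂.2
  have hspan : s₂ - s₁ ≤ 4 * δ :=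
    sub_le_four_mul_of_isMinOn hyp (hs₁.2.trans hs₂.1)
      (fun u hu v hv => hf u (hsub hu) v (hsub hv)) (β t)
      (hmin₁.on_subset hsub) (hmin₂.on_subset hsub)
  refine ⟨t, ht, f s₁, ⟨s₁, ⟨by linarith [hs₂.1], by linarith [hs₁.2]⟩, rfl⟩, ?_⟩
  rintro _ ⟨s, hs, rfl⟩
  exact hmin₁ hs
end
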